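/- Let 0 ≤ δ < 1, T > 0, and let Θ be a mild solution of the critical dissipative quasi-geostrophic equation on [0,T] with data Θ₀ such that sup_{0≤t≤T} ‖Θ(t)‖_{X⁰} < ∞, sup_{0≤t≤T} ‖Θ(t)‖_{X^{−δ}} < ∞ and ∫₀^T ‖Θ(t)‖_{X^{1−δ}} dt < ∞. Then for every t ∈ [0,T], ‖Θ(t)‖_{X^{−δ}} + ∫₀^t ‖Θ(z)‖_{X^{1−δ}} dz ≤ ‖Θ₀‖_{X^{−δ}} + 2^{2−δ} (sup_{0≤z≤t} ‖Θ(z)‖_{X⁰}) ∫₀^t ‖Θ(z)‖_{X^{1−δ}} dz. -/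

import Mathlib

/-!
On the Fourier side the dissipation damps the mode `ξ` at rate `|ξ|`, so Duhamel's formula with
moduli inside bounds `|Θ(z,ξ)|` by the solution `D` of `D' = -|ξ| D + |N[Θ](z,ξ)|`,
`D(0) = |Θ₀(ξ)|`. Integrating that equation over `[0,t]` gives, for almost every `ξ`,
`|Θ(t,ξ)| + |ξ| ∫₀ᵗ |Θ(z,ξ)| dz ≤ |Θ₀(ξ)| + ∫₀ᵗ |N[Θ](s,ξ)| ds`; multiplying by `|ξ|^{-δ}` and
integrating in `ξ` (Tonelli) leaves `∫₀ᵗ ‖N[Θ](s)‖_{X^{-δ}} ds`. The kernel of `N` is bounded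
by `|ξ|`, and `|ξ|^{1-δ} ≤ |ξ-η|^{1-δ} + |η|^{1-δ}` splits `|ξ|^{1-δ}` between the two factors
of the convolution, so `‖N[Θ](s)‖_{X^{-δ}} ≤ 2 ‖Θ(s)‖_{X⁰} ‖Θ(s)‖_{X^{1-δ}}`; finally
`2 ≤ 2^{2-δ}`.
-/

open MeasureTheory Filter
open scoped ENNReal NNReal

noncomputable section

abbrev E2 : Type := EuclideanSpace ℝ (Fin 2)

/-- Fourier-side `X^σ` norm: `∫ |ξ|^σ |g ξ| dξ` (valued in `ℝ≥0∞`). -/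
def Xnorm (σ : ℝ) (g : E2 → ℂ) : ℝ≥0∞ :=
  ∫⁻ ξ : E2, ENNReal.ofReal (‖ξ‖ ^ σ) * ‖g ξ‖₊

/-- Fourier-side quasi-geostrophic nonlinearity `N[Θ]`. -/
def QGN (Θ : ℝ → E2 → ℂ) (z : ℝ) (ξ : E2) : ℂ :=
  ∫ η : E2, (((ξ 0 * η 1 - ξ 1 * η 0) / ‖η‖ : ℝ) : ℂ) * Θ z (ξ - η) * Θ z η

/-- `Θ` is a mild solution on `[0,T]` with data `Θ₀`. -/
def IsMildSolutionOn (Θ : ℝ → E2 → ℂ) (Θ₀ : E2 → ℂ) (T : ℝ) : Prop :=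
  ∀ t ∈ Set.Icc (0:ℝ) T, ∀ᵐ ξ : E2 ∂volume, Θ t ξ =
    ((Real.exp (-(t * ‖ξ‖)) : ℝ) : ℂ) * Θ₀ ξ +
    ∫ z in (0:ℝ)..t, ((Real.exp (-((t - z) * ‖ξ‖)) : ℝ) : ℂ) * QGN Θ z ξ

/-- `Θ` is a global mild solution with data `Θ₀`. -/
def IsGlobalMildSolution (Θ : ℝ → E2 → ℂ) (Θ₀ : E2 → ℂ) : Prop :=
  ∀ t : ℝ, 0 ≤ t → ∀ᵐ ξ : E2 ∂volume, Θ t ξ =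
    ((Real.exp (-(t * ‖ξ‖)) : ℝ) : ℂ) * Θ₀ ξ +
    ∫ z in (0:ℝ)..t, ((Real.exp (-((t - z) * ‖ξ‖)) : ℝ) : ℂ) * QGN Θ z ξ

/-- `Θ ∈ C_b([0,∞), X^σ)`: bounded `X^σ` norm and `L¹`-continuity of `t ↦ |·|^σ Θ(t,·)`. -/
def CbX (σ : ℝ) (Θ : ℝ → E2 → ℂ) : Prop :=
  (⨆ t ∈ Set.Ici (0:ℝ), Xnorm σ (Θ t)) < ⊤ ∧
  ∀ t ∈ Set.Ici (0:ℝ),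
    Tendsto (fun s => ∫⁻ ξ : E2, ENNReal.ofReal (‖ξ‖ ^ σ) * ‖Θ s ξ - Θ t ξ‖₊)
      (nhdsWithin t (Set.Ici 0)) (nhds 0)

lemma abs_cross_le_norm_mul_norm (ξ η : E2) : |ξ 0 * η 1 - ξ 1 * η 0| ≤ ‖ξ‖ * ‖η‖ := by
  refine abs_le_of_sq_le_sq ?_ (by positivity)
  rw [mul_pow, EuclideanSpace.real_norm_sq_eq, EuclideanSpace.real_norm_sq_eq]
  simp only [Fin.sum_univ_two]
  nlinarith [sq_nonneg (ξ 0 * η 0 + ξ 1 * η 1)]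

lemma norm_cross_div_norm_le (ξ η : E2) :
    ‖(((ξ 0 * η 1 - ξ 1 * η 0) / ‖η‖ : ℝ) : ℂ)‖ ≤ ‖ξ‖ := by
  rw [Complex.norm_real, Real.norm_eq_abs, abs_div, abs_norm]
  rcases eq_or_ne η 0 with rfl | hη
  · simp
  · exact div_le_of_le_mul₀ (norm_nonneg _) (norm_nonneg _) (abs_cross_le_norm_mul_norm ξ η)

lemma enorm_QGN_le (Θ : ℝ → E2 → ℂ) (z : ℝ) (ξ : E2) :
    ‖QGN Θ z ξ‖ₑ ≤ ENNReal.ofReal ‖ξ‖ * ∫⁻ η, ‖Θ z (ξ - η)‖ₑ * ‖Θ z η‖ₑ := by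
  refine (enorm_integral_le_lintegral_enorm _).trans ?_
  rw [← lintegral_const_mul' _ _ ENNReal.ofReal_ne_top]
  refine lintegral_mono fun η => ?_
  rw [enorm_mul, enorm_mul, mul_assoc, ← ofReal_norm]
  gcongr
  exact norm_cross_div_norm_le ξ η

lemma measurable_uncurry_QGN {Θ : ℝ → E2 → ℂ} (hmeas : Measurable (Function.uncurry Θ)) :
    Measurable (Function.uncurry (QGN Θ)) := by
  have hint : Measurable fun p : (ℝ × E2) × E2 =>
      (((p.1.2 0 * p.2 1 - p.1.2 1 * p.2 0) / ‖p.2‖ : ℝ) : ℂ) * Θ p.1.1 (p.1.2 - p.2) *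
        Θ p.1.1 p.2 := by
    fun_prop
  exact hint.stronglyMeasurable.integral_prod_right'.measurable

lemma lintegral_lintegral_mul_sub {G : Type*} [MeasurableSpace G] [AddGroup G]
    [MeasurableAdd₂ G] [MeasurableNeg G] {μ : Measure G} [μ.IsAddRightInvariant] [SFinite μ]
    {f g : G → ℝ≥0∞} (hf : Measurable f) (hg : Measurable g) :
    ∫⁻ ξ, ∫⁻ η, f (ξ - η) * g η ∂μ ∂μ = (∫⁻ ξ, f ξ ∂μ) * ∫⁻ η, g η ∂μ := by
  rw [lintegral_lintegral_swap (by fun_prop), ← lintegral_const_mul _ hg]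
  refine lintegral_congr fun η => ?_
  rw [lintegral_mul_const _ (by fun_prop), lintegral_sub_right_eq_self f η]

lemma norm_rpow_le_norm_sub_rpow_add_norm_rpow {E : Type*} [SeminormedAddGroup E] {p : ℝ}
    (hp0 : 0 ≤ p) (hp1 : p ≤ 1) (ξ η : E) : ‖ξ‖ ^ p ≤ ‖ξ - η‖ ^ p + ‖η‖ ^ p :=
  (Real.rpow_le_rpow (norm_nonneg _) (norm_le_norm_sub_add ξ η) hp0).trans
    (Real.rpow_add_le_add_rpow (norm_nonneg _) (norm_nonneg _) hp0 hp1)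

lemma ofReal_norm_rpow_mul_ofReal_norm {E : Type*} [SeminormedAddGroup E] {ξ : E}
    (hξ : ‖ξ‖ ≠ 0) (σ : ℝ) :
    ENNReal.ofReal (‖ξ‖ ^ σ) * ENNReal.ofReal ‖ξ‖ = ENNReal.ofReal (‖ξ‖ ^ (σ + 1)) := by
  rw [← ENNReal.ofReal_mul (by positivity), Real.rpow_add_one hξ]

lemma Xnorm_zero_eq_lintegral_enorm (g : E2 → ℂ) : Xnorm 0 g = ∫⁻ ξ, ‖g ξ‖ₑ := by
  simp [Xnorm, enorm_eq_nnnorm]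

theorem Xnorm_QGN_le {Θ : ℝ → E2 → ℂ} {z : ℝ} (hΘ : Measurable (Θ z)) {σ : ℝ}
    (hσ0 : -1 ≤ σ) (hσ1 : σ ≤ 0) :
    Xnorm σ (QGN Θ z) ≤ 2 * Xnorm 0 (Θ z) * Xnorm (σ + 1) (Θ z) := by
  set p := σ + 1
  set f : E2 → ℝ≥0∞ := fun ξ => ‖Θ z ξ‖ₑ
  set fp : E2 → ℝ≥0∞ := fun ξ => ENNReal.ofReal (‖ξ‖ ^ p) * ‖Θ z ξ‖ₑ
  have hpointwise : ∀ᵐ ξ : E2, ENNReal.ofReal (‖ξ‖ ^ σ) * ‖QGN Θ z ξ‖ₑ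
      ≤ ∫⁻ η, (fp (ξ - η) * f η + f (ξ - η) * fp η) := by
    filter_upwards [Measure.ae_ne volume 0] with ξ hξ
    calc ENNReal.ofReal (‖ξ‖ ^ σ) * ‖QGN Θ z ξ‖ₑ
        ≤ ENNReal.ofReal (‖ξ‖ ^ σ) * (ENNReal.ofReal ‖ξ‖ * ∫⁻ η, f (ξ - η) * f η) := by
          gcongr; exact enorm_QGN_le Θ z ξ
      _ = ∫⁻ η, ENNReal.ofReal (‖ξ‖ ^ p) * (f (ξ - η) * f η) := by
          rw [← mul_assoc, ofReal_norm_rpow_mul_ofReal_norm (norm_ne_zero_iff.2 hξ),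
            lintegral_const_mul' _ _ ENNReal.ofReal_ne_top]
      _ ≤ ∫⁻ η, (fp (ξ - η) * f η + f (ξ - η) * fp η) := by
          refine lintegral_mono fun η => ?_
          calc ENNReal.ofReal (‖ξ‖ ^ p) * (f (ξ - η) * f η)
              ≤ (ENNReal.ofReal (‖ξ - η‖ ^ p) + ENNReal.ofReal (‖η‖ ^ p)) * (f (ξ - η) * f η) := by
                rw [← ENNReal.ofReal_add (by positivity) (by positivity)]
                gcongr
                exact norm_rpow_le_norm_sub_rpow_add_norm_rpow (by linarith) (by linarith) ξ η
            _ = fp (ξ - η) * f η + f (ξ - η) * fp η := by ring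
  have hf : Measurable f := hΘ.enorm
  have hfp : Measurable fp := by fun_prop
  have hXp : Xnorm p (Θ z) = ∫⁻ ξ, fp ξ := rfl
  calc Xnorm σ (QGN Θ z)
      ≤ ∫⁻ ξ, ∫⁻ η, (fp (ξ - η) * f η + f (ξ - η) * fp η) := lintegral_mono_ae hpointwise
    _ = (∫⁻ ξ, fp ξ) * (∫⁻ ξ, f ξ) + (∫⁻ ξ, f ξ) * ∫⁻ ξ, fp ξ := by
        rw [lintegral_congr fun ξ => lintegral_add_left (by fun_prop) _,
          lintegral_add_left (by fun_prop), lintegral_lintegral_mul_sub hfp hf,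
          lintegral_lintegral_mul_sub hf hfp]
    _ = 2 * Xnorm 0 (Θ z) * Xnorm (σ + 1) (Θ z) := by
        rw [Xnorm_zero_eq_lintegral_enorm, hXp]; ring

lemma lintegral_Ioc_ofReal_mul_exp {r : ℝ} (hr : 0 ≤ r) {s t : ℝ} (hst : s ≤ t) :
    ∫⁻ z in Set.Ioc s t, ENNReal.ofReal (r * Real.exp (-((z - s) * r)))
      = ENNReal.ofReal (1 - Real.exp (-((t - s) * r))) := by
  have hderiv : ∀ z ∈ Set.uIcc s t, HasDerivAt (fun z => -Real.exp (-((z - s) * r)))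
      (r * Real.exp (-((z - s) * r))) z := fun z _ => by
    refine ((((hasDerivAt_id z).sub_const s).mul_const r).neg.exp).neg.congr_deriv ?_
    simp only [id, Pi.neg_apply]; ring
  have hcont : Continuous fun z : ℝ => r * Real.exp (-((z - s) * r)) := by fun_prop
  rw [← ofReal_integral_eq_lintegral_ofReal, ← intervalIntegral.integral_of_le hst,
    intervalIntegral.integral_eq_sub_of_hasDerivAt hderiv (hcont.intervalIntegrable s t)]
  · congr 1; simp only [sub_self, zero_mul, neg_zero, Real.exp_zero]; ring
  · exact hcont.integrableOn_Icc.mono_set Set.Ioc_subset_Icc_self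
  · exact Eventually.of_forall fun z => by positivity

lemma lintegral_Ioc_lintegral_Ioc_swap {F : ℝ → ℝ → ℝ≥0∞} (hF : Measurable (Function.uncurry F))
    (a t : ℝ) :
    ∫⁻ z in Set.Ioc a t, ∫⁻ s in Set.Ioc a z, F z s
      = ∫⁻ s in Set.Ioc a t, ∫⁻ z in Set.Icc s t, F z s := by
  set G : ℝ → ℝ → ℝ≥0∞ := fun z s => {p : ℝ × ℝ | p.2 ≤ p.1}.indicator (Function.uncurry F) (z, s)
  have hG : Measurable (Function.uncurry G) :=
    hF.indicator (measurableSet_le measurable_snd measurable_fst)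
  calc ∫⁻ z in Set.Ioc a t, ∫⁻ s in Set.Ioc a z, F z s
      = ∫⁻ z in Set.Ioc a t, ∫⁻ s in Set.Ioc a t, G z s := by
        refine setLIntegral_congr_fun measurableSet_Ioc fun z hz => ?_
        have hGz : G z = (Set.Iic z).indicator (F z) := by
          ext s; simp [G, Set.indicator]
        rw [hGz, setLIntegral_indicator measurableSet_Iic]
        congr 2
        ext s; simp only [Set.mem_inter_iff, Set.mem_Iic, Set.mem_Ioc]
        constructor <;> intro h <;> refine ⟨?_, ?_⟩ <;> grind
    _ = ∫⁻ s in Set.Ioc a t, ∫⁻ z in Set.Ioc a t, G z s := lintegral_lintegral_swap hG.aemeasurable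
    _ = ∫⁻ s in Set.Ioc a t, ∫⁻ z in Set.Icc s t, F z s := by
        refine setLIntegral_congr_fun measurableSet_Ioc fun s hs => ?_
        have hGs : (fun z => G z s) = (Set.Ici s).indicator (fun z => F z s) := by
          ext z; simp [G, Set.indicator]
        rw [hGs, setLIntegral_indicator measurableSet_Ici]
        congr 2
        ext z; simp only [Set.mem_inter_iff, Set.mem_Ici, Set.mem_Ioc, Set.mem_Icc]
        constructor <;> intro h <;> grind

lemma ofReal_exp_neg_add_ofReal_one_sub_exp_neg {x : ℝ} (hx : 0 ≤ x) :
    ENNReal.ofReal (Real.exp (-x)) + ENNReal.ofReal (1 - Real.exp (-x)) = 1 := by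
  rw [← ENNReal.ofReal_add (Real.exp_nonneg _)
    (sub_nonneg.2 (Real.exp_le_one_iff.2 (neg_nonpos.2 hx))), add_sub_cancel, ENNReal.ofReal_one]

/-- Duhamel's formula for `∂ₜu = -r u + N`, `u(0) = u₀`, with `a = ‖u₀‖ₑ` and `n = ‖N‖ₑ`
in place of the data: it bounds `‖u(z)‖ₑ` and solves `∂ₜD = -r D + n` exactly. -/
def duhamelMajorant (r : ℝ) (a : ℝ≥0∞) (n : ℝ → ℝ≥0∞) (z : ℝ) : ℝ≥0∞ :=
  ENNReal.ofReal (Real.exp (-(z * r))) * a +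
    ∫⁻ s in Set.Ioc 0 z, ENNReal.ofReal (Real.exp (-((z - s) * r))) * n s

section duhamelMajorant

variable {r : ℝ} {a : ℝ≥0∞} {n : ℝ → ℝ≥0∞} {t : ℝ}

lemma ofReal_mul_lintegral_duhamelMajorant (hr : 0 ≤ r) (ht : 0 ≤ t) (hn : Measurable n) :
    ENNReal.ofReal r * ∫⁻ z in Set.Ioc 0 t, duhamelMajorant r a n z
      = ENNReal.ofReal (1 - Real.exp (-(t * r))) * a +
        ∫⁻ s in Set.Ioc 0 t, ENNReal.ofReal (1 - Real.exp (-((t - s) * r))) * n s := by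
  rw [← lintegral_const_mul' _ _ ENNReal.ofReal_ne_top]
  simp only [duhamelMajorant, mul_add]
  rw [lintegral_add_left (by fun_prop)]
  congr 1
  · calc ∫⁻ z in Set.Ioc 0 t, ENNReal.ofReal r * (ENNReal.ofReal (Real.exp (-(z * r))) * a)
        = (∫⁻ z in Set.Ioc 0 t, ENNReal.ofReal (r * Real.exp (-((z - 0) * r)))) * a := by
          rw [← lintegral_mul_const _ (by fun_prop)]
          simp only [sub_zero, ENNReal.ofReal_mul hr, mul_assoc]
      _ = ENNReal.ofReal (1 - Real.exp (-(t * r))) * a := by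
          rw [lintegral_Ioc_ofReal_mul_exp hr ht, sub_zero]
  · calc ∫⁻ z in Set.Ioc 0 t, ENNReal.ofReal r *
          ∫⁻ s in Set.Ioc 0 z, ENNReal.ofReal (Real.exp (-((z - s) * r))) * n s
        = ∫⁻ z in Set.Ioc 0 t, ∫⁻ s in Set.Ioc 0 z,
            ENNReal.ofReal (r * Real.exp (-((z - s) * r))) * n s := by
          refine lintegral_congr fun z => ?_
          rw [← lintegral_const_mul' _ _ ENNReal.ofReal_ne_top]
          simp only [ENNReal.ofReal_mul hr, mul_assoc]
      _ = ∫⁻ s in Set.Ioc 0 t, ∫⁻ z in Set.Icc s t,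
            ENNReal.ofReal (r * Real.exp (-((z - s) * r))) * n s :=
          lintegral_Ioc_lintegral_Ioc_swap (by fun_prop) 0 t
      _ = ∫⁻ s in Set.Ioc 0 t, ENNReal.ofReal (1 - Real.exp (-((t - s) * r))) * n s := by
          refine setLIntegral_congr_fun measurableSet_Ioc fun s hs => ?_
          rw [lintegral_mul_const _ (by fun_prop), setLIntegral_congr Ioc_ae_eq_Icc.symm,
            lintegral_Ioc_ofReal_mul_exp hr hs.2]

lemma duhamelMajorant_add_ofReal_mul_lintegral (hr : 0 ≤ r) (ht : 0 ≤ t) (hn : Measurable n) :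
    duhamelMajorant r a n t + ENNReal.ofReal r * ∫⁻ z in Set.Ioc 0 t, duhamelMajorant r a n z
      = a + ∫⁻ s in Set.Ioc 0 t, n s := by
  rw [ofReal_mul_lintegral_duhamelMajorant hr ht hn, duhamelMajorant, add_add_add_comm,
    ← add_mul, ofReal_exp_neg_add_ofReal_one_sub_exp_neg (by positivity), one_mul,
    ← lintegral_add_left (by fun_prop)]
  congr 1
  refine setLIntegral_congr_fun measurableSet_Ioc fun s hs => ?_
  rw [← add_mul, ofReal_exp_neg_add_ofReal_one_sub_exp_neg
    (mul_nonneg (sub_nonneg.2 hs.2) hr), one_mul]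

end duhamelMajorant

lemma measurable_duhamelMajorant {α : Type*} [MeasurableSpace α] {r : α → ℝ} {a : α → ℝ≥0∞}
    {n : α → ℝ → ℝ≥0∞} (hr : Measurable r) (ha : Measurable a)
    (hn : Measurable (Function.uncurry n)) :
    Measurable fun p : α × ℝ => duhamelMajorant (r p.1) (a p.1) (n p.1) p.2 := by
  have hset : MeasurableSet {q : (α × ℝ) × ℝ | q.2 ∈ Set.Ioc 0 q.1.2} :=
    (measurableSet_lt measurable_const measurable_snd).inter
      (measurableSet_le measurable_snd measurable_fst.snd)
  have hint : Measurable fun q : (α × ℝ) × ℝ =>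
      ENNReal.ofReal (Real.exp (-((q.1.2 - q.2) * r q.1.1))) * n q.1.1 q.2 := by
    have : Measurable fun q : (α × ℝ) × ℝ => n q.1.1 q.2 :=
      hn.comp (measurable_fst.fst.prodMk measurable_snd)
    fun_prop
  unfold duhamelMajorant
  simp_rw [← lintegral_indicator measurableSet_Ioc]
  have hfree : Measurable fun p : α × ℝ => ENNReal.ofReal (Real.exp (-(p.2 * r p.1))) * a p.1 := by
    fun_prop
  exact hfree.add (hint.indicator hset).lintegral_prod_right'

lemma enorm_duhamel_le_duhamelMajorant {r z : ℝ} (hz : 0 ≤ z) (u₀ : ℂ) (N : ℝ → ℂ) :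
    ‖((Real.exp (-(z * r)) : ℝ) : ℂ) * u₀ +
        ∫ s in (0:ℝ)..z, ((Real.exp (-((z - s) * r)) : ℝ) : ℂ) * N s‖ₑ
      ≤ duhamelMajorant r ‖u₀‖ₑ (fun s => ‖N s‖ₑ) z := by
  have henorm_exp (x : ℝ) : ‖((Real.exp x : ℝ) : ℂ)‖ₑ = ENNReal.ofReal (Real.exp x) := by
    rw [← ofReal_norm, Complex.norm_real, Real.norm_of_nonneg (Real.exp_nonneg x)]
  refine (enorm_add_le _ _).trans (add_le_add (by rw [enorm_mul, henorm_exp]) ?_)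
  rw [intervalIntegral.integral_of_le hz]
  refine (enorm_integral_le_lintegral_enorm _).trans_eq (lintegral_congr fun s => ?_)
  rw [enorm_mul, henorm_exp]

lemma lintegral_mul_add_lintegral {α β : Type*} [MeasurableSpace α] [MeasurableSpace β]
    {μ : Measure α} {ν : Measure β} [SFinite μ] [SFinite ν] {w A : α → ℝ≥0∞}
    {B : β → α → ℝ≥0∞} (hw : Measurable w) (hA : Measurable A)
    (hB : Measurable (Function.uncurry B)) :
    ∫⁻ x, w x * (A x + ∫⁻ y, B y x ∂ν) ∂μ
      = ∫⁻ x, w x * A x ∂μ + ∫⁻ y, ∫⁻ x, w x * B y x ∂μ ∂ν := by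
  simp_rw [mul_add]
  rw [lintegral_add_left (f := fun x => w x * A x) (hw.mul hA),
    lintegral_lintegral_swap (by fun_prop)]
  congr 1
  refine lintegral_congr fun x => (lintegral_const_mul _ ?_).symm
  exact hB.comp (measurable_id.prodMk measurable_const)

lemma measurable_Xnorm {Θ : ℝ → E2 → ℂ} (hmeas : Measurable (Function.uncurry Θ)) (σ : ℝ) :
    Measurable fun s => Xnorm σ (Θ s) := by
  unfold Xnorm
  fun_prop

namespace IsMildSolutionOn

variable {Θ : ℝ → E2 → ℂ} {Θ₀ : E2 → ℂ} {T t : ℝ}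

lemma ae_enorm_le_duhamelMajorant (hmild : IsMildSolutionOn Θ Θ₀ T) {z : ℝ}
    (hz : z ∈ Set.Icc 0 T) :
    ∀ᵐ ξ : E2, ‖Θ z ξ‖ₑ ≤ duhamelMajorant ‖ξ‖ ‖Θ₀ ξ‖ₑ (fun s => ‖QGN Θ s ξ‖ₑ) z := by
  filter_upwards [hmild z hz] with ξ hξ
  rw [hξ]
  exact enorm_duhamel_le_duhamelMajorant hz.1 _ _

lemma ae_ae_enorm_le_duhamelMajorant (hmild : IsMildSolutionOn Θ Θ₀ T)
    (hmeas₀ : Measurable Θ₀) (hmeas : Measurable (Function.uncurry Θ)) (ht : t ∈ Set.Icc 0 T) :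
    ∀ᵐ ξ : E2, ∀ᵐ z ∂volume.restrict (Set.Ioc 0 t),
      ‖Θ z ξ‖ₑ ≤ duhamelMajorant ‖ξ‖ ‖Θ₀ ξ‖ₑ (fun s => ‖QGN Θ s ξ‖ₑ) z := by
  have hn : Measurable (Function.uncurry fun (ξ : E2) (s : ℝ) => ‖QGN Θ s ξ‖ₑ) :=
    ((measurable_uncurry_QGN hmeas).comp measurable_swap).enorm
  have hmajorant := measurable_duhamelMajorant measurable_norm hmeas₀.enorm hn
  refine (Measure.ae_ae_comm ?_).2 ?_
  · exact measurableSet_le (hmeas.comp measurable_swap).enorm hmajorant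
  · exact (ae_restrict_iff' measurableSet_Ioc).2 (Eventually.of_forall fun z hz =>
      hmild.ae_enorm_le_duhamelMajorant ⟨hz.1.le, hz.2.trans ht.2⟩)

lemma ae_enorm_add_lintegral_le (hmild : IsMildSolutionOn Θ Θ₀ T)
    (hmeas₀ : Measurable Θ₀) (hmeas : Measurable (Function.uncurry Θ)) (ht : t ∈ Set.Icc 0 T) :
    ∀ᵐ ξ : E2, ‖Θ t ξ‖ₑ + ∫⁻ z in Set.Ioc 0 t, ENNReal.ofReal ‖ξ‖ * ‖Θ z ξ‖ₑ
      ≤ ‖Θ₀ ξ‖ₑ + ∫⁻ s in Set.Ioc 0 t, ‖QGN Θ s ξ‖ₑ := by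
  filter_upwards [hmild.ae_enorm_le_duhamelMajorant ht,
    hmild.ae_ae_enorm_le_duhamelMajorant hmeas₀ hmeas ht] with ξ hξt hξ
  rw [lintegral_const_mul' _ _ ENNReal.ofReal_ne_top,
    ← duhamelMajorant_add_ofReal_mul_lintegral (norm_nonneg ξ) ht.1
      ((measurable_uncurry_QGN hmeas).of_uncurry_right.enorm)]
  gcongr ?_ + _ * ?_
  exact lintegral_mono_ae hξ

theorem Xnorm_add_lintegral_Xnorm_le (hmild : IsMildSolutionOn Θ Θ₀ T)
    (hmeas₀ : Measurable Θ₀) (hmeas : Measurable (Function.uncurry Θ)) (ht : t ∈ Set.Icc 0 T)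
    (σ : ℝ) :
    Xnorm σ (Θ t) + ∫⁻ z in Set.Ioc 0 t, Xnorm (σ + 1) (Θ z)
      ≤ Xnorm σ Θ₀ + ∫⁻ s in Set.Ioc 0 t, Xnorm σ (QGN Θ s) := by
  have hw : Measurable fun ξ : E2 => ENNReal.ofReal (‖ξ‖ ^ σ) := by fun_prop
  have hweight (z : ℝ) : ∫⁻ ξ, ENNReal.ofReal (‖ξ‖ ^ σ) * (ENNReal.ofReal ‖ξ‖ * ‖Θ z ξ‖ₑ)
      = Xnorm (σ + 1) (Θ z) := by
    refine lintegral_congr_ae ?_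
    filter_upwards [Measure.ae_ne volume 0] with ξ hξ
    rw [← mul_assoc, ofReal_norm_rpow_mul_ofReal_norm (norm_ne_zero_iff.2 hξ)]
    rfl
  have hLHS := lintegral_mul_add_lintegral (μ := volume) (ν := volume.restrict (Set.Ioc 0 t)) hw
    (hmeas.of_uncurry_left (x := t)).enorm (B := fun z ξ => ENNReal.ofReal ‖ξ‖ * ‖Θ z ξ‖ₑ)
    (by fun_prop)
  have hRHS := lintegral_mul_add_lintegral (μ := volume) (ν := volume.restrict (Set.Ioc 0 t)) hw
    hmeas₀.enorm (B := fun s ξ => ‖QGN Θ s ξ‖ₑ) (measurable_uncurry_QGN hmeas).enorm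
  simp only [hweight] at hLHS
  calc Xnorm σ (Θ t) + ∫⁻ z in Set.Ioc 0 t, Xnorm (σ + 1) (Θ z)
      = ∫⁻ ξ, ENNReal.ofReal (‖ξ‖ ^ σ) *
          (‖Θ t ξ‖ₑ + ∫⁻ z in Set.Ioc 0 t, ENNReal.ofReal ‖ξ‖ * ‖Θ z ξ‖ₑ) := hLHS.symm
    _ ≤ ∫⁻ ξ, ENNReal.ofReal (‖ξ‖ ^ σ) * (‖Θ₀ ξ‖ₑ + ∫⁻ s in Set.Ioc 0 t, ‖QGN Θ s ξ‖ₑ) :=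
        lintegral_mono_ae <| (hmild.ae_enorm_add_lintegral_le hmeas₀ hmeas ht).mono
          fun ξ h => by gcongr
    _ = Xnorm σ Θ₀ + ∫⁻ s in Set.Ioc 0 t, Xnorm σ (QGN Θ s) := hRHS

end IsMildSolutionOn

theorem qg_apriori_estimate_Xneg_general (δ : ℝ) (hδ0 : 0 ≤ δ) (hδ1 : δ < 1)
    (T : ℝ) (Θ₀ : E2 → ℂ) (hmeas₀ : Measurable Θ₀)
    (Θ : ℝ → E2 → ℂ) (hmeas : Measurable (Function.uncurry Θ))
    (hmild : IsMildSolutionOn Θ Θ₀ T) :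
    ∀ t ∈ Set.Icc (0:ℝ) T,
      Xnorm (-δ) (Θ t) + ∫⁻ z in Set.Ioc (0:ℝ) t, Xnorm (1 - δ) (Θ z)
        ≤ Xnorm (-δ) Θ₀ +
          (2 : ℝ≥0∞) ^ (2 - δ) * (⨆ z ∈ Set.Icc (0:ℝ) t, Xnorm 0 (Θ z)) *
            ∫⁻ z in Set.Ioc (0:ℝ) t, Xnorm (1 - δ) (Θ z) := by
  intro t ht
  set S := ⨆ z ∈ Set.Icc (0:ℝ) t, Xnorm 0 (Θ z)
  rw [show 1 - δ = -δ + 1 by ring]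
  have hNL (s : ℝ) (hs : s ∈ Set.Ioc 0 t) : Xnorm (-δ) (QGN Θ s) ≤ 2 * S * Xnorm (-δ + 1) (Θ s) :=
    (Xnorm_QGN_le hmeas.of_uncurry_left (by linarith) (by linarith)).trans <| by
      gcongr
      exact le_biSup (fun z => Xnorm 0 (Θ z)) ⟨hs.1.le, hs.2⟩
  have htwo : (2 : ℝ≥0∞) ≤ 2 ^ (2 - δ) := by
    simpa using ENNReal.rpow_le_rpow_of_exponent_le (x := 2) (by norm_num) (by linarith : 1 ≤ 2 - δ)
  calc Xnorm (-δ) (Θ t) + ∫⁻ z in Set.Ioc 0 t, Xnorm (-δ + 1) (Θ z)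
      ≤ Xnorm (-δ) Θ₀ + ∫⁻ s in Set.Ioc 0 t, Xnorm (-δ) (QGN Θ s) :=
        hmild.Xnorm_add_lintegral_Xnorm_le hmeas₀ hmeas ht (-δ)
    _ ≤ Xnorm (-δ) Θ₀ + ∫⁻ s in Set.Ioc 0 t, 2 * S * Xnorm (-δ + 1) (Θ s) :=
        add_le_add_right (setLIntegral_mono ((measurable_Xnorm hmeas _).const_mul _) hNL) _
    _ ≤ Xnorm (-δ) Θ₀ + 2 ^ (2 - δ) * S * ∫⁻ z in Set.Ioc 0 t, Xnorm (-δ + 1) (Θ z) := by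
        rw [lintegral_const_mul _ (measurable_Xnorm hmeas _)]
        gcongr

/-- the a priori inequality in `X^{-δ}`:
`‖Θ(t)‖_{X^{-δ}} + ∫₀^t ‖Θ‖_{X^{1-δ}} ≤ ‖Θ₀‖_{X^{-δ}} + 2^{2-δ}(sup_{[0,t]}‖Θ‖_{X⁰})∫₀^t ‖Θ‖_{X^{1-δ}}`. -/
theorem qg_apriori_estimate_Xneg (δ : ℝ) (hδ0 : 0 ≤ δ) (hδ1 : δ < 1)
    (T : ℝ) (hT : 0 < T) (Θ₀ : E2 → ℂ) (hmeas₀ : Measurable Θ₀)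
    (Θ : ℝ → E2 → ℂ) (hmeas : Measurable (Function.uncurry Θ))
    (hmild : IsMildSolutionOn Θ Θ₀ T)
    (hsup0 : (⨆ t ∈ Set.Icc (0:ℝ) T, Xnorm 0 (Θ t)) < ⊤)
    (hsupδ : (⨆ t ∈ Set.Icc (0:ℝ) T, Xnorm (-δ) (Θ t)) < ⊤)
    (hint : (∫⁻ t in Set.Icc (0:ℝ) T, Xnorm (1 - δ) (Θ t)) < ⊤) :
    ∀ t ∈ Set.Icc (0:ℝ) T,
      Xnorm (-δ) (Θ t) + ∫⁻ z in Set.Ioc (0:ℝ) t, Xnorm (1 - δ) (Θ z)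
        ≤ Xnorm (-δ) Θ₀ +
          (2 : ℝ≥0∞) ^ (2 - δ) * (⨆ z ∈ Set.Icc (0:ℝ) t, Xnorm 0 (Θ z)) *
            ∫⁻ z in Set.Ioc (0:ℝ) t, Xnorm (1 - δ) (Θ z) :=
  qg_apriori_estimate_Xneg_general δ hδ0 hδ1 T Θ₀ hmeas₀ Θ hmeas hmild

end
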